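/- arXiv:1706.10146 — 7 statements merged into one kernel-verified Lean document; each statement's English description precedes it below -/
import Mathlib

section
/- Let k ≥ 2 be even, n ≥ 2(k+1), and let A = {1,…,k+1} ⊆ {1,…,n}. Then for every permutation π of {1,…,n}: 1{π(A) = A or π(A) ∩ A = ∅} = Σ_{S ⊊ A} (−1)^{|S|} · 1{π(S) ⊆ A}, where the sum ranges over all proper subsets S of A (including the empty set), as an equation of integers. -/
theorem stmt1 (k n : ℕ) (hk : 2 ≤ k) (hke : Even k) (hn : 2 * (k + 1) ≤ n)
    (A : Finset (Fin n)) (hA : ∀ x : Fin n, x ∈ A ↔ (x : ℕ) < k + 1)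
    (π : Equiv.Perm (Fin n)) :
    (if Finset.image ⇑π A = A ∨ Finset.image ⇑π A ∩ A = ∅ then (1 : ℤ) else 0) =
      ∑ S ∈ A.powerset.erase A,
        (-1 : ℤ) ^ S.card * (if Finset.image ⇑π S ⊆ A then 1 else 0) := by
  classical
  set T := A.filter (fun x => π x ∈ A) with hTdef
  have hTA : T ⊆ A := Finset.filter_subset _ _
  have hcardA : A.card = k + 1 := by
    have hA' : A = Finset.attachFin (Finset.range (k + 1))
        (fun m hm => by simp only [Finset.mem_range] at hm; omega) := by
      ext x
      simp [hA, Finset.mem_attachFin]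
    rw [hA', Finset.card_attachFin, Finset.card_range]
  have hAne : A ≠ ∅ := by
    intro h; rw [h] at hcardA; simp at hcardA
  have hiff : ∀ S : Finset (Fin n), S ⊆ A → (Finset.image π S ⊆ A ↔ S ⊆ T) := by
    intro S hS
    constructor
    · intro h x hx
      exact Finset.mem_filter.2 ⟨hS hx, h (Finset.mem_image_of_mem _ hx)⟩
    · intro h y hy
      obtain ⟨x, hx, rfl⟩ := Finset.mem_image.1 hy
      exact (Finset.mem_filter.1 (h hx)).2
  by_cases hTeq : T = A
  · -- π(A) = A case
    have himg : Finset.image π A = A := by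
      apply Finset.eq_of_subset_of_card_le
      · intro y hy
        obtain ⟨x, hx, rfl⟩ := Finset.mem_image.1 hy
        have hxT : x ∈ T := hTeq ▸ hx
        exact (Finset.mem_filter.1 hxT).2
      · rw [Finset.card_image_of_injective _ π.injective]
    rw [if_pos (Or.inl himg)]
    have hcongr : ∀ S ∈ A.powerset.erase A,
        (-1 : ℤ) ^ S.card * (if Finset.image ⇑π S ⊆ A then 1 else 0) = (-1) ^ S.card := by
      intro S hS
      have hS' : S ⊆ A := Finset.mem_powerset.1 (Finset.mem_of_mem_erase hS)
      rw [if_pos, mul_one]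
      intro y hy
      obtain ⟨x, hx, rfl⟩ := Finset.mem_image.1 hy
      rw [← himg]
      exact Finset.mem_image_of_mem _ (hS' hx)
    rw [Finset.sum_congr rfl hcongr]
    have hmem : A ∈ A.powerset := Finset.mem_powerset.2 le_rfl
    have hsum := Finset.sum_erase_add A.powerset (fun S => (-1 : ℤ) ^ S.card) hmem
    rw [Finset.sum_powerset_neg_one_pow_card, if_neg hAne] at hsum
    have hodd : ((-1 : ℤ)) ^ A.card = -1 := by
      rw [hcardA]
      exact Odd.neg_one_pow (Even.add_one hke)
    simp only [hodd] at hsum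
    linarith
  · have himgne : Finset.image π A ≠ A := by
      intro h
      apply hTeq
      apply Finset.Subset.antisymm hTA
      intro x hx
      refine Finset.mem_filter.2 ⟨hx, ?_⟩
      rw [← h]
      exact Finset.mem_image_of_mem _ hx
    have hiT : Finset.image π A ∩ A = ∅ ↔ T = ∅ := by
      constructor
      · intro h
        ext x
        simp only [hTdef, Finset.mem_filter, Finset.notMem_empty, iff_false, not_and]
        intro hx hpx
        have hmem : π x ∈ Finset.image π A ∩ A :=
          Finset.mem_inter.2 ⟨Finset.mem_image_of_mem _ hx, hpx⟩
        rw [h] at hmem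
        exact absurd hmem (Finset.notMem_empty _)
      · intro h
        ext y
        simp only [Finset.mem_inter, Finset.mem_image, Finset.notMem_empty, iff_false, not_and]
        rintro ⟨x, hx, rfl⟩ hy
        have hxT : x ∈ T := Finset.mem_filter.2 ⟨hx, hy⟩
        rw [h] at hxT
        exact absurd hxT (Finset.notMem_empty _)
    have hstep : ∀ S ∈ A.powerset.erase A,
        (-1 : ℤ) ^ S.card * (if Finset.image ⇑π S ⊆ A then 1 else 0) =
          if S ⊆ T then (-1 : ℤ) ^ S.card else 0 := by
      intro S hS
      have hS' : S ⊆ A := Finset.mem_powerset.1 (Finset.mem_of_mem_erase hS)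
      by_cases h : S ⊆ T
      · rw [if_pos ((hiff S hS').2 h), if_pos h, mul_one]
      · rw [if_neg (fun hc => h ((hiff S hS').1 hc)), if_neg h, mul_zero]
    rw [Finset.sum_congr rfl hstep]
    have hins : ∑ S ∈ A.powerset.erase A, (if S ⊆ T then (-1 : ℤ) ^ S.card else 0)
        = ∑ S ∈ A.powerset, (if S ⊆ T then (-1 : ℤ) ^ S.card else 0) := by
      rw [← Finset.sum_erase_add _ _ (Finset.mem_powerset.2 le_rfl)]
      rw [if_neg, add_zero]
      intro h
      exact hTeq (Finset.Subset.antisymm hTA h)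
    rw [hins, Finset.sum_ite, Finset.sum_const_zero, add_zero]
    have hfilter : A.powerset.filter (fun S => S ⊆ T) = T.powerset := by
      ext S
      simp only [Finset.mem_filter, Finset.mem_powerset]
      exact ⟨fun ⟨_, h2⟩ => h2, fun h => ⟨h.trans hTA, h⟩⟩
    rw [hfilter, Finset.sum_powerset_neg_one_pow_card]
    by_cases hT0 : T = ∅
    · rw [if_pos hT0, if_pos (Or.inr (hiT.2 hT0))]
    · rw [if_neg hT0, if_neg]
      rintro (h | h)
      · exact himgne h
      · exact hT0 (hiT.1 h)
end

section
/- Let n ≥ 6 and let I = {π ∈ S_n : π({1,2,3}) = {1,2,3} or π({1,2,3}) ∩ {1,2,3} = ∅}. Then I contains no 2-coset; that is, for all distinct α₁, α₂ ∈ {1,…,n} and distinct β₁, β₂ ∈ {1,…,n}, the set T = {π ∈ S_n : π(α₁) = β₁ and π(α₂) = β₂} is not a subset of I. -/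
/-!
Fix `π ∈ T` and `u ∈ S` with `u ∉ {α₁, α₂}`, and a second point `u' ∈ S`. For any `v ∉ S`
other than `α₁, α₂`, the permutation `π * swap u v` is still in `T`; it sends `u ↦ π v` and
`u' ↦ π u'`. If `π S = S` take `v ∉ S`, so that `π v ∉ S ∋ π u'`; if `π S ∩ S = ∅` take
`v ∈ π⁻¹ S`, so that `π v ∈ S ∌ π u'`. Either way `π * swap u v` maps one point of `S` into `S`
and another out of it, so it lies in neither part of the union.
-/

open Finset Equiv

variable {α : Type*} [DecidableEq α]

lemma exists_perm_apply_eq_apply_eq {α₁ α₂ β₁ β₂ : α} (hα : α₁ ≠ α₂) (hβ : β₁ ≠ β₂) :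
    ∃ π : Perm α, π α₁ = β₁ ∧ π α₂ = β₂ := by
  set σ := swap α₁ β₁
  have hσ : σ α₂ ≠ β₁ := fun h => hα (σ.injective (by rw [h, swap_apply_left])).symm
  refine ⟨swap (σ α₂) β₂ * σ, ?_, by simp⟩
  rw [Perm.mul_apply, swap_apply_left, swap_apply_of_ne_of_ne hσ.symm hβ]

lemma exists_mem_ne_ne {A : Finset α} (hA : 3 ≤ #A) (a₁ a₂ : α) :
    ∃ v ∈ A, v ≠ a₁ ∧ v ≠ a₂ := by
  obtain ⟨v, hvA, hv⟩ := exists_mem_notMem_of_card_lt_card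
    ((card_le_two : #{a₁, a₂} ≤ 2).trans_lt hA)
  simp only [mem_insert, mem_singleton, not_or] at hv
  exact ⟨v, hvA, hv⟩

lemma not_image_eq_self_or_inter_eq_empty {f : α → α} {S : Finset α} {x y : α}
    (hx : x ∈ S) (hy : y ∈ S) (hxy : f x ∈ S ↔ f y ∉ S) :
    ¬ (S.image f = S ∨ S.image f ∩ S = ∅) := by
  rintro (h | h)
  · have := h ▸ mem_image_of_mem f hx
    have := h ▸ mem_image_of_mem f hy
    tauto
  · have hout : ∀ z ∈ S, f z ∉ S := fun z hz hfz => by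
      simpa [h] using mem_inter.2 ⟨mem_image_of_mem f hz, hfz⟩
    have := hout x hx
    have := hout y hy
    tauto

lemma exists_notMem_apply_mem_iff [Fintype α] {S : Finset α} (hS : 3 ≤ #S)
    (hSc : #S + 3 ≤ Fintype.card α) {π : Perm α} (hπ : S.image π = S ∨ S.image π ∩ S = ∅)
    {y : α} (hy : y ∈ S) (a₁ a₂ : α) :
    ∃ v ∉ S, v ≠ a₁ ∧ v ≠ a₂ ∧ (π v ∈ S ↔ π y ∉ S) := by
  rcases hπ with h | h
  · obtain ⟨v, hv, hv₁, hv₂⟩ := exists_mem_ne_ne (A := Sᶜ) (by rw [card_compl]; omega) a₁ a₂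
    rw [mem_compl] at hv
    have hπv : π v ∉ S := by
      rw [← h, mem_image]
      rintro ⟨w, hw, hwv⟩
      exact hv (π.injective hwv ▸ hw)
    have hπy : π y ∈ S := h ▸ mem_image_of_mem π hy
    exact ⟨v, hv, hv₁, hv₂, by tauto⟩
  · obtain ⟨v, hv, hv₁, hv₂⟩ :=
      exists_mem_ne_ne (A := S.map π.symm.toEmbedding) (by rwa [card_map]) a₁ a₂
    rw [mem_map_equiv, symm_symm] at hv
    have hout : ∀ z ∈ S, π z ∉ S := fun z hz hπz => by
      simpa [h] using mem_inter.2 ⟨mem_image_of_mem π hz, hπz⟩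
    exact ⟨v, fun hvS => hout v hvS hv, hv₁, hv₂, iff_of_true hv (hout y hy)⟩

theorem not_subset_setOf_image_eq_self_or_inter_eq_empty [Fintype α] {S : Finset α}
    (hS : 3 ≤ #S) (hSc : #S + 3 ≤ Fintype.card α)
    {α₁ α₂ β₁ β₂ : α} (hα : α₁ ≠ α₂) (hβ : β₁ ≠ β₂) :
    ¬ {π : Perm α | π α₁ = β₁ ∧ π α₂ = β₂} ⊆ {π | S.image π = S ∨ S.image π ∩ S = ∅} := by
  intro hT
  obtain ⟨π, hπ₁, hπ₂⟩ := exists_perm_apply_eq_apply_eq hα hβ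
  obtain ⟨u, hu, hu₁, hu₂⟩ := exists_mem_ne_ne hS α₁ α₂
  obtain ⟨u', hu', hu'u⟩ := S.exists_mem_ne (by omega) u
  obtain ⟨v, hv, hv₁, hv₂, hπv⟩ :=
    exists_notMem_apply_mem_iff hS hSc (hT ⟨hπ₁, hπ₂⟩) hu' α₁ α₂
  have hu'v : u' ≠ v := fun h => hv (h ▸ hu')
  refine not_image_eq_self_or_inter_eq_empty (f := π * swap u v) hu hu' ?_ (hT ⟨?_, ?_⟩)
  · rwa [Perm.mul_apply, Perm.mul_apply, swap_apply_left, swap_apply_of_ne_of_ne hu'u hu'v]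
  · rw [Perm.mul_apply, swap_apply_of_ne_of_ne hu₁.symm hv₁.symm, hπ₁]
  · rw [Perm.mul_apply, swap_apply_of_ne_of_ne hu₂.symm hv₂.symm, hπ₂]

theorem stmt2 (n : ℕ) (hn : 6 ≤ n)
    (a b c : Fin n) (ha : (a : ℕ) = 0) (hb : (b : ℕ) = 1) (hc : (c : ℕ) = 2)
    (α₁ α₂ β₁ β₂ : Fin n) (hα : α₁ ≠ α₂) (hβ : β₁ ≠ β₂) :
    ¬ ({π : Equiv.Perm (Fin n) | π α₁ = β₁ ∧ π α₂ = β₂} ⊆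
        {π : Equiv.Perm (Fin n) |
          Finset.image ⇑π {a, b, c} = ({a, b, c} : Finset (Fin n)) ∨
          Finset.image ⇑π {a, b, c} ∩ ({a, b, c} : Finset (Fin n)) = ∅}) := by
  have hcard : #({a, b, c} : Finset (Fin n)) = 3 :=
    card_eq_three.2 ⟨a, b, c, by grind, by grind, by grind, rfl⟩
  exact not_subset_setOf_image_eq_self_or_inter_eq_empty (by omega)
    (by rw [hcard, Fintype.card_fin]; omega) hα hβ
end

section
/- Let k ≥ 2, n ≥ 2(k+1), A = {1,…,k+1}, and let I = {π ∈ S_n : π(A) = A or π(A) ∩ A = ∅}. Then I contains no k-coset: for every injective sequence α₁,…,α_k of elements of {1,…,n} and injective sequence β₁,…,β_k of elements of {1,…,n}, the set {π ∈ S_n : π(α_i) = β_i for all i} is not contained in I. -/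
/-!
A permutation `π` lies in `I` exactly when `π(A) ⊆ A` or `π(A) ⊆ Aᶜ`, so it suffices to find `π` in
the coset sending one point of `A` into `A` and another point of `A` out of `A`. Since `A` and its
complement both have more than `k` points, each of them contains points outside the `k` prescribed
sources and targets, and a coset can be extended by one or two more prescribed values. If some
`αᵢ ∈ A`, one further value `π a` (with `a ∈ A` free) suffices: put it outside `A` if `βᵢ ∈ A`, inside
otherwise. If no `αᵢ` lies in `A`, prescribe two points of `A`, one going in and one going out.
-/

open Finset Function

section Extension

variable {ι X : Type*} [Finite ι] {α β : ι → X}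

theorem Equiv.Perm.exists_extending_pair_and_apply_eq (hα : Injective α) (hβ : Injective β)
    {x y : X} (hx : x ∉ Set.range α) (hy : y ∉ Set.range β) :
    ∃ π : Equiv.Perm X, (∀ i, π (α i) = β i) ∧ π x = y := by
  obtain ⟨π, hπ⟩ := Equiv.Perm.exists_extending_pair (Option.elim' x α) (Option.elim' y β)
    (Option.injective_iff.2 ⟨hα, hx⟩) (Option.injective_iff.2 ⟨hβ, hy⟩)
  exact ⟨π, fun i => hπ (some i), hπ none⟩

theorem Equiv.Perm.exists_extending_pair_and_apply_eq₂ (hα : Injective α) (hβ : Injective β)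
    {x₁ x₂ y₁ y₂ : X} (hx₁ : x₁ ∉ Set.range α) (hx₂ : x₂ ∉ Set.range α) (hx : x₁ ≠ x₂)
    (hy₁ : y₁ ∉ Set.range β) (hy₂ : y₂ ∉ Set.range β) (hy : y₁ ≠ y₂) :
    ∃ π : Equiv.Perm X, (∀ i, π (α i) = β i) ∧ π x₁ = y₁ ∧ π x₂ = y₂ := by
  have range_elim' {f : ι → X} {z w : X} (hw : w ∉ Set.range f) (hz : z ≠ w) :
      w ∉ Set.range (Option.elim' z f) := by
    rintro ⟨_ | i, hi⟩
    exacts [hz hi, hw ⟨i, hi⟩]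
  obtain ⟨π, hπ, hπx₂⟩ := exists_extending_pair_and_apply_eq
    (α := Option.elim' x₁ α) (β := Option.elim' y₁ β) (Option.injective_iff.2 ⟨hα, hx₁⟩) (Option.injective_iff.2 ⟨hβ, hy₁⟩)
    (range_elim' hx₂ hx) (range_elim' hy₂ hy)
  exact ⟨π, fun i => hπ (some i), hπ none, hπx₂⟩

end Extension

theorem Finset.exists_mem_notMem_range_of_card_lt {ι X : Type*} [Fintype ι] [DecidableEq X]
    (f : ι → X) {s : Finset X} (h : Fintype.card ι < #s) : ∃ x ∈ s, x ∉ Set.range f := by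
  obtain ⟨x, hxs, hx⟩ := exists_mem_notMem_of_card_lt_card
    (card_image_le.trans_lt (h.trans_eq' (card_univ (α := ι))) : #(univ.image f) < #s)
  exact ⟨x, hxs, fun ⟨i, hi⟩ => hx (hi ▸ mem_image_of_mem f (mem_univ i))⟩

theorem Finset.not_image_eq_or_disjoint {X : Type*} [DecidableEq X] {A : Finset X} {f : X → X}
    {x y : X} (hx : x ∈ A) (hfx : f x ∈ A) (hy : y ∈ A) (hfy : f y ∉ A) :
    ¬ (A.image f = A ∨ A.image f ∩ A = ∅) := by
  rintro (h | h)
  · exact hfy (h ▸ mem_image_of_mem f hy)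
  · exact eq_empty_iff_forall_notMem.1 h (f x) (mem_inter.2 ⟨mem_image_of_mem f hx, hfx⟩)

theorem exists_perm_extending_pair_not_image_eq_or_disjoint {ι X : Type*} [Fintype ι]
    [Fintype X] [DecidableEq X] {α β : ι → X} (hα : Injective α) (hβ : Injective β)
    {A : Finset X} (hA : Fintype.card ι < #A) (hAc : Fintype.card ι < #Aᶜ) (hA₂ : 1 < #A) :
    ∃ π : Equiv.Perm X, (∀ i, π (α i) = β i) ∧ ¬ (A.image π = A ∨ A.image π ∩ A = ∅) := by
  obtain ⟨b, hbA, hbβ⟩ := exists_mem_notMem_range_of_card_lt β hA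
  obtain ⟨c, hcA, hcβ⟩ := exists_mem_notMem_range_of_card_lt β hAc
  rw [mem_compl] at hcA
  by_cases hαA : ∃ i, α i ∈ A
  · obtain ⟨i, hi⟩ := hαA
    obtain ⟨a, haA, haα⟩ := exists_mem_notMem_range_of_card_lt α hA
    by_cases hβi : β i ∈ A
    · obtain ⟨π, hπ, hπa⟩ := Equiv.Perm.exists_extending_pair_and_apply_eq hα hβ haα hcβ
      exact ⟨π, hπ, not_image_eq_or_disjoint hi (hπ i ▸ hβi) haA (hπa ▸ hcA)⟩
    · obtain ⟨π, hπ, hπa⟩ := Equiv.Perm.exists_extending_pair_and_apply_eq hα hβ haα hbβ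
      exact ⟨π, hπ, not_image_eq_or_disjoint haA (hπa ▸ hbA) hi (hπ i ▸ hβi)⟩
  · push Not at hαA
    obtain ⟨a₁, ha₁, a₂, ha₂, ha⟩ := one_lt_card.1 hA₂
    obtain ⟨π, hπ, hπa₁, hπa₂⟩ := Equiv.Perm.exists_extending_pair_and_apply_eq₂ hα hβ
      (fun ⟨i, hi⟩ => hαA i (hi ▸ ha₁)) (fun ⟨i, hi⟩ => hαA i (hi ▸ ha₂)) ha hbβ hcβ
      (ne_of_mem_of_not_mem hbA hcA)
    exact ⟨π, hπ, not_image_eq_or_disjoint ha₁ (hπa₁ ▸ hbA) ha₂ (hπa₂ ▸ hcA)⟩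

theorem stmt3 (k n : ℕ) (hk : 2 ≤ k) (hn : 2 * (k + 1) ≤ n)
    (A : Finset (Fin n)) (hA : ∀ x : Fin n, x ∈ A ↔ (x : ℕ) < k + 1)
    (α β : Fin k → Fin n) (hα : Function.Injective α) (hβ : Function.Injective β) :
    ¬ ({π : Equiv.Perm (Fin n) | ∀ i, π (α i) = β i} ⊆
        {π : Equiv.Perm (Fin n) |
          Finset.image ⇑π A = A ∨ Finset.image ⇑π A ∩ A = ∅}) := by
  have hA_eq : A = univ.map (Fin.castLEEmb (by omega : k + 1 ≤ n)) := by
    ext x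
    simp only [hA, mem_map, mem_univ, true_and]
    exact ⟨fun hx => ⟨⟨x, hx⟩, rfl⟩, by rintro ⟨y, rfl⟩; exact y.isLt⟩
  have hAcard : #A = k + 1 := by simp [hA_eq]
  have hAccard : #Aᶜ = n - (k + 1) := by rw [card_compl, hAcard, Fintype.card_fin]
  obtain ⟨π, hπ, hπA⟩ := exists_perm_extending_pair_not_image_eq_or_disjoint hα hβ
    (A := A) (by simp [hAcard]) (by simp [hAccard]; omega) (by omega)
  exact fun hsub => hπA (hsub hπ)
end

section
/- For every n ≥ 1, if I ⊆ S_n is a family of permutations such that any two members of I agree on at least one point (i.e., for all π, σ ∈ I there exists i with π(i) = σ(i)), then |I| ≤ (n−1)!. -/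
theorem stmt6 (n : ℕ) (hn : 1 ≤ n) (I : Finset (Equiv.Perm (Fin n)))
    (h : ∀ π ∈ I, ∀ σ ∈ I, ∃ i, π i = σ i) : I.card ≤ (n - 1).factorial := by
  obtain ⟨m, rfl⟩ := Nat.exists_eq_succ_of_ne_zero (by omega : n ≠ 0)
  simp only [Nat.succ_sub_one]
  -- map each π to the permutation of Fin m obtained from π * addRight (π⁻¹ 0),
  -- which fixes 0
  set F : Equiv.Perm (Fin (m + 1)) → Equiv.Perm (Fin m) := fun π =>
    (Equiv.Perm.decomposeFin (π * Equiv.addRight (π⁻¹ 0))).2 with hF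
  have fst : ∀ π : Equiv.Perm (Fin (m + 1)),
      (Equiv.Perm.decomposeFin (π * Equiv.addRight (π⁻¹ 0))).1 = 0 := by
    intro π
    have := Equiv.Perm.decomposeFin_symm_apply_zero
      (Equiv.Perm.decomposeFin (π * Equiv.addRight (π⁻¹ 0))).1
      (Equiv.Perm.decomposeFin (π * Equiv.addRight (π⁻¹ 0))).2
    rw [← this, Prod.mk.eta, Equiv.symm_apply_apply]
    simp
  have hinj : Set.InjOn F I := by
    intro π hπ σ hσ heq
    have hfull : π * Equiv.addRight (π⁻¹ 0) = σ * Equiv.addRight (σ⁻¹ 0) := by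
      apply Equiv.Perm.decomposeFin.injective
      apply Prod.ext
      · rw [fst, fst]
      · exact heq
    obtain ⟨i, hi⟩ := h π hπ σ hσ
    have hπσ : ∀ x, π (x + π⁻¹ 0) = σ (x + σ⁻¹ 0) := fun x => by
      have := congrArg (fun e : Equiv.Perm (Fin (m+1)) => e x) hfull
      simpa using this
    have key : π (i - π⁻¹ 0 + π⁻¹ 0) = σ (i - π⁻¹ 0 + σ⁻¹ 0) := hπσ (i - π⁻¹ 0)
    rw [sub_add_cancel, hi] at key
    have : i = i - π⁻¹ 0 + σ⁻¹ 0 := σ.injective key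
    have hk : π⁻¹ 0 = σ⁻¹ 0 := add_left_cancel (a := i - π⁻¹ 0)
      (by rw [sub_add_cancel, ← this])
    rw [hk] at hfull
    exact mul_right_cancel hfull
  calc I.card ≤ (Finset.univ : Finset (Equiv.Perm (Fin m))).card :=
        Finset.card_le_card_of_injOn F (fun _ _ => Finset.mem_univ _) hinj
    _ = m.factorial := by simp [Fintype.card_perm]
end

section
/- The 4-sortedness function f(x₁,x₂,x₃,x₄) = 1{x₁ ≤ x₂ ≤ x₃ ≤ x₄ or x₁ ≥ x₂ ≥ x₃ ≥ x₄} on {0,1}⁴ cannot be written as a sum of monomials of degree at most 2 in the variables x₁,…,x₄, 1−x₁,…,1−x₄: there is no finite collection of products of at most 2 literals (each literal being some x_i or 1−x_i) whose sum equals f on all of {0,1}⁴. -/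
/-!
Every monomial is nonnegative on the cube, so a decomposition of the sortedness function must consist
of monomials vanishing wherever the function does, e.g. at `0100`, `0010` and `1001`; and one of them
is nonzero at `0000`. A degree-≤2 monomial nonzero at the origin is a product of at most two factors
`1 - xᵢ`, so it vanishes at a point exactly when that point has a `1` in one of at most two coordinates.
But the supports `{1}`, `{2}`, `{0, 3}` cannot be hit by two coordinates.
-/

/-- A literal on `{0,1}⁴`: a coordinate `x i` or its negation `1 - x i`. -/
def Literal4 (g : (Fin 4 → ℤ) → ℤ) : Prop :=
  ∃ i : Fin 4, (g = fun x => x i) ∨ (g = fun x => 1 - x i)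

/-- A monomial of degree at most 2: a product of at most two literals. -/
def Mono2 (g : (Fin 4 → ℤ) → ℤ) : Prop :=
  (g = fun _ => 1) ∨ Literal4 g ∨
    ∃ a b, Literal4 a ∧ Literal4 b ∧ g = fun x => a x * b x

namespace Literal4

variable {g : (Fin 4 → ℤ) → ℤ}

lemma nonneg (hg : Literal4 g) {x : Fin 4 → ℤ} (hx : ∀ i, x i = 0 ∨ x i = 1) : 0 ≤ g x := by
  obtain ⟨i, rfl | rfl⟩ := hg <;> rcases hx i with h | h <;> simp [h]

lemma exists_eq_zero_iff_of_ne_zero (hg : Literal4 g) (h0 : g 0 ≠ 0) :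
    ∃ i, ∀ x, g x = 0 ↔ x i = 1 := by
  obtain ⟨i, rfl | rfl⟩ := hg
  · simp at h0
  · exact ⟨i, fun x => by rw [sub_eq_zero, eq_comm]⟩

end Literal4

namespace Mono2

variable {g : (Fin 4 → ℤ) → ℤ}

lemma nonneg (hg : Mono2 g) {x : Fin 4 → ℤ} (hx : ∀ i, x i = 0 ∨ x i = 1) : 0 ≤ g x := by
  obtain rfl | h | ⟨a, b, ha, hb, rfl⟩ := hg
  · exact zero_le_one
  · exact h.nonneg hx
  · exact mul_nonneg (ha.nonneg hx) (hb.nonneg hx)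

lemma exists_eq_zero_iff_of_ne_zero (hg : Mono2 g) (h0 : g 0 ≠ 0) :
    ∃ S : Finset (Fin 4), S.card ≤ 2 ∧ ∀ x, g x = 0 ↔ ∃ i ∈ S, x i = 1 := by
  obtain rfl | h | ⟨a, b, ha, hb, rfl⟩ := hg
  · exact ⟨∅, by simp⟩
  · obtain ⟨i, hi⟩ := h.exists_eq_zero_iff_of_ne_zero h0
    exact ⟨{i}, by simp, by simpa using hi⟩
  · obtain ⟨i, hi⟩ := ha.exists_eq_zero_iff_of_ne_zero (left_ne_zero_of_mul h0)
    obtain ⟨k, hk⟩ := hb.exists_eq_zero_iff_of_ne_zero (right_ne_zero_of_mul h0)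
    refine ⟨{i, k}, Finset.card_le_two, fun x => ?_⟩
    simp [mul_eq_zero, hi, hk]

lemma eq_zero_of_sum_eq_zero {m : ℕ} {M : Fin m → (Fin 4 → ℤ) → ℤ} (hM : ∀ j, Mono2 (M j))
    {x : Fin 4 → ℤ} (hx : ∀ i, x i = 0 ∨ x i = 1) (hsum : ∑ j, M j x = 0) (j : Fin m) :
    M j x = 0 :=
  (Finset.sum_eq_zero_iff_of_nonneg fun j _ => (hM j).nonneg hx).mp hsum j (Finset.mem_univ j)

end Mono2

lemma three_le_card_of_mem {S : Finset (Fin 4)} (h1 : 1 ∈ S) (h2 : 2 ∈ S) (h03 : 0 ∈ S ∨ 3 ∈ S) :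
    3 ≤ S.card := by
  obtain ⟨j, hj, hj12⟩ : ∃ j ∈ S, j ≠ 1 ∧ j ≠ 2 := by
    rcases h03 with h | h
    · exact ⟨0, h, by decide⟩
    · exact ⟨3, h, by decide⟩
  calc 3 = ({1, 2, j} : Finset (Fin 4)).card := by
        rw [Finset.card_insert_of_notMem (by simp [hj12.1.symm]),
          Finset.card_pair hj12.2.symm]
    _ ≤ S.card := Finset.card_le_card (by simp [Finset.insert_subset_iff, *])

theorem stmt10 :
    ¬ ∃ (m : ℕ) (M : Fin m → ((Fin 4 → ℤ) → ℤ)),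
        (∀ j, Mono2 (M j)) ∧
        ∀ x : Fin 4 → ℤ, (∀ i, x i = 0 ∨ x i = 1) →
          (∑ j, M j x) =
            (if (x 0 ≤ x 1 ∧ x 1 ≤ x 2 ∧ x 2 ≤ x 3) ∨
                (x 3 ≤ x 2 ∧ x 2 ≤ x 1 ∧ x 1 ≤ x 0) then (1 : ℤ) else 0) := by
  rintro ⟨m, M, hM, hsum⟩
  obtain ⟨j, -, hj0⟩ := Finset.exists_ne_zero_of_sum_ne_zero <|
    (hsum 0 (by decide)).trans_ne (by decide)
  have vanish (x : Fin 4 → ℤ) (hx : ∀ i, x i = 0 ∨ x i = 1) (hf : ∑ j, M j x = 0) : M j x = 0 :=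
    Mono2.eq_zero_of_sum_eq_zero hM hx hf j
  have z1 := vanish ![0, 1, 0, 0] (by decide) ((hsum _ (by decide)).trans (by decide))
  have z2 := vanish ![0, 0, 1, 0] (by decide) ((hsum _ (by decide)).trans (by decide))
  have z3 := vanish ![1, 0, 0, 1] (by decide) ((hsum _ (by decide)).trans (by decide))
  obtain ⟨S, hS, hzero⟩ := (hM j).exists_eq_zero_iff_of_ne_zero hj0
  rw [hzero] at z1 z2 z3
  have h1 : 1 ∈ S := by obtain ⟨i, hi, h⟩ := z1; fin_cases i <;> simp_all
  have h2 : 2 ∈ S := by obtain ⟨i, hi, h⟩ := z2; fin_cases i <;> simp_all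
  have h03 : 0 ∈ S ∨ 3 ∈ S := by obtain ⟨i, hi, h⟩ := z3; fin_cases i <;> simp_all
  have := three_le_card_of_mem h1 h2 h03
  omega
end

section
/- Let n ≥ 6 and let f : S_n → ℤ be defined by f(π) = 1 if π({1,2,3}) = {1,2,3} or π({1,2,3}) ∩ {1,2,3} = ∅, and 0 otherwise. Then f is not expressible as a nonnegative linear combination of indicator functions of 2-cosets: there do not exist nonnegative reals b_{α,β}, indexed by pairs (α,β) of ordered pairs of distinct elements of {1,…,n}, with f = Σ b_{α,β} · 1_{T_{α↦β}}. -/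
/-!
Each 2-coset `T_{α ↦ β}` contains a permutation `π` for which `π({1,2,3})` meets both
`{1,2,3}` and its complement, so `f π = 0`. Evaluating a nonnegative combination of
2-coset indicators at such a `π` kills the coefficient of `T_{α ↦ β}`; hence every
coefficient vanishes, contradicting `f 1 = 1`.
-/

open Finset

theorem Equiv.Perm.exists_apply_eq_apply_eq {α : Type*} {a₁ a₂ b₁ b₂ : α}
    (ha : a₁ ≠ a₂) (hb : b₁ ≠ b₂) :
    ∃ π : Equiv.Perm α, π a₁ = b₁ ∧ π a₂ = b₂ := by
  have hinj : ∀ {x y : α}, x ≠ y → Function.Injective ![x, y] := by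
    intro x y hxy i j
    fin_cases i <;> fin_cases j <;> simp [hxy, hxy.symm]
  obtain ⟨π, hπ⟩ := Equiv.Perm.exists_extending_pair _ _ (hinj ha) (hinj hb)
  exact ⟨π, hπ 0, hπ 1⟩

theorem Finset.eq_zero_of_eq_sum_nonneg_mul_ite_of_exists_eq_zero {G ι R : Type*}
    [Semiring R] [PartialOrder R] [IsOrderedRing R]
    (s : Finset ι) (c : ι → R) (hc : ∀ i ∈ s, 0 ≤ c i)
    (P : ι → G → Prop) [∀ i x, Decidable (P i x)] (g : G → R)
    (hg : ∀ x, g x = ∑ i ∈ s, c i * if P i x then 1 else 0)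
    (hvanish : ∀ i ∈ s, ∃ x, P i x ∧ g x = 0) (x : G) : g x = 0 := by
  have hterm_nonneg : ∀ y, ∀ i ∈ s, 0 ≤ c i * if P i y then 1 else 0 := fun y i hi =>
    mul_nonneg (hc i hi) (by split_ifs <;> simp)
  have hcoef : ∀ i ∈ s, c i = 0 := by
    intro i hi
    obtain ⟨y, hy, hgy⟩ := hvanish i hi
    have := (sum_eq_zero_iff_of_nonneg (hterm_nonneg y)).1 ((hg y).symm.trans hgy) i hi
    simpa [hy] using this
  rw [hg x]
  exact sum_eq_zero fun i hi => by simp [hcoef i hi]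

section Mixing

variable {α : Type*} [DecidableEq α]

theorem Finset.not_image_eq_or_inter_eq_empty {π : α → α} {S : Finset α} {u v : α}
    (hu : u ∈ S) (hπu : π u ∈ S) (hv : v ∈ S) (hπv : π v ∉ S) :
    ¬ (S.image π = S ∨ S.image π ∩ S = ∅) := by
  rintro (h | h)
  · exact hπv (h ▸ mem_image_of_mem π hv)
  · exact (eq_empty_iff_forall_notMem.1 h) (π u) (mem_inter.2 ⟨mem_image_of_mem π hu, hπu⟩)

theorem Finset.not_image_mul_swap_eq_or_inter_eq_empty (π : Equiv.Perm α) {S : Finset α}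
    {x y z : α} (hx : x ∈ S) (hz : z ∈ S) (hzx : z ≠ x) (hy : y ∉ S)
    (hside : π y ∈ S ↔ π z ∉ S) :
    ¬ (S.image ⇑(π * Equiv.swap x y) = S ∨ S.image ⇑(π * Equiv.swap x y) ∩ S = ∅) := by
  have hπx : (π * Equiv.swap x y) x = π y := by simp
  have hπz : (π * Equiv.swap x y) z = π z := by
    simp [Equiv.swap_apply_of_ne_of_ne hzx (ne_of_mem_of_not_mem hz hy)]
  by_cases hzS : π z ∈ S
  · exact not_image_eq_or_inter_eq_empty hz (hπz ▸ hzS) hx (hπx ▸ fun h => hside.1 h hzS)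
  · exact not_image_eq_or_inter_eq_empty hx (hπx ▸ hside.2 hzS) hz (hπz ▸ hzS)

theorem Equiv.Perm.exists_apply_mem_ne_ne (π : Equiv.Perm α) {V : Finset α} (hV : 2 < #V)
    (a₁ a₂ : α) : ∃ y, π y ∈ V ∧ y ≠ a₁ ∧ y ≠ a₂ := by
  obtain ⟨y, hyV, hy⟩ := exists_mem_notMem_of_card_lt_card
    (s := {a₁, a₂}) (t := V.map π.symm.toEmbedding) (by simpa using card_le_two.trans_lt hV)
  simp only [mem_map_equiv, symm_symm, mem_insert, mem_singleton, not_or] at hyV hy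
  exact ⟨y, hyV, hy⟩

theorem Equiv.Perm.exists_apply_eq_apply_eq_not_image_eq_or_inter_eq_empty [Fintype α]
    {S : Finset α} (hS : 3 ≤ #S) (hα : #S + 3 ≤ Fintype.card α)
    {a₁ a₂ b₁ b₂ : α} (ha : a₁ ≠ a₂) (hb : b₁ ≠ b₂) :
    ∃ π : Equiv.Perm α, π a₁ = b₁ ∧ π a₂ = b₂ ∧ ¬ (S.image π = S ∨ S.image π ∩ S = ∅) := by
  obtain ⟨π₀, h₁, h₂⟩ := exists_apply_eq_apply_eq ha hb
  obtain ⟨x, hxS, hxa⟩ := exists_mem_notMem_of_card_lt_card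
    (s := {a₁, a₂}) (t := S) (card_le_two.trans_lt hS)
  simp only [mem_insert, mem_singleton, not_or] at hxa
  obtain ⟨z, hzS, hzx⟩ := exists_mem_ne (by omega : 1 < #S) x
  -- For `y ∉ S ∪ {a₁, a₂}`, `π₀ * swap x y` stays in the coset and trades `π₀ x` for `π₀ y`.
  have hswap : ∀ y ∉ S, y ≠ a₁ → y ≠ a₂ → (π₀ y ∈ S ↔ π₀ z ∉ S) →
      ∃ π : Equiv.Perm α, π a₁ = b₁ ∧ π a₂ = b₂ ∧ ¬ (S.image π = S ∨ S.image π ∩ S = ∅) :=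
    fun y hy hy₁ hy₂ hside => ⟨π₀ * swap x y,
      by simp [swap_apply_of_ne_of_ne (Ne.symm hxa.1) hy₁.symm, h₁],
      by simp [swap_apply_of_ne_of_ne (Ne.symm hxa.2) hy₂.symm, h₂],
      not_image_mul_swap_eq_or_inter_eq_empty π₀ hxS hzS hzx hy hside⟩
  by_cases hin : ∃ u ∈ S, π₀ u ∈ S
  · by_cases hout : ∃ v ∈ S, π₀ v ∉ S
    · obtain ⟨u, hu, hπu⟩ := hin
      obtain ⟨v, hv, hπv⟩ := hout
      exact ⟨π₀, h₁, h₂, not_image_eq_or_inter_eq_empty hu hπu hv hπv⟩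
    · push Not at hout
      obtain ⟨y, hy, hy₁, hy₂⟩ := π₀.exists_apply_mem_ne_ne (V := Sᶜ)
        (by rw [card_compl]; omega) a₁ a₂
      rw [mem_compl] at hy
      exact hswap y (fun h => hy (hout y h)) hy₁ hy₂ (by simp [hy, hout z hzS])
  · push Not at hin
    obtain ⟨y, hy, hy₁, hy₂⟩ := π₀.exists_apply_mem_ne_ne (by omega : 2 < #S) a₁ a₂
    exact hswap y (fun h => hin y h hy) hy₁ hy₂ (by simp [hy, hin z hzS])

end Mixing

theorem stmt11 (n : ℕ) (hn : 6 ≤ n)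
    (a b c : Fin n) (ha : (a : ℕ) = 0) (hb : (b : ℕ) = 1) (hc : (c : ℕ) = 2)
    (f : Equiv.Perm (Fin n) → ℝ)
    (hf : ∀ π, f π =
      (if Finset.image ⇑π {a, b, c} = ({a, b, c} : Finset (Fin n)) ∨
          Finset.image ⇑π {a, b, c} ∩ ({a, b, c} : Finset (Fin n)) = ∅
        then 1 else 0)) :
    ¬ ∃ coef : (Fin n × Fin n) → (Fin n × Fin n) → ℝ,
        (∀ α β, 0 ≤ coef α β) ∧
        ∀ π : Equiv.Perm (Fin n),
          f π = ∑ α ∈ Finset.univ.filter (fun p : Fin n × Fin n => p.1 ≠ p.2),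
                  ∑ β ∈ Finset.univ.filter (fun p : Fin n × Fin n => p.1 ≠ p.2),
                    coef α β * (if π α.1 = β.1 ∧ π α.2 = β.2 then 1 else 0) := by
  rintro ⟨coef, hcoef, hsum⟩
  set pairs := univ.filter fun p : Fin n × Fin n => p.1 ≠ p.2
  have hS : #({a, b, c} : Finset (Fin n)) = 3 := card_eq_three.2
    ⟨a, b, c, Fin.val_ne_iff.1 (by omega), Fin.val_ne_iff.1 (by omega),
      Fin.val_ne_iff.1 (by omega), rfl⟩
  have hf_one : f 1 = 1 := by simp [hf]
  have hf_zero : f 1 = 0 := by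
    refine eq_zero_of_eq_sum_nonneg_mul_ite_of_exists_eq_zero (pairs ×ˢ pairs)
      (fun q => coef q.1 q.2) (fun q _ => hcoef q.1 q.2)
      (fun q π => π q.1.1 = q.2.1 ∧ π q.1.2 = q.2.2) f
      (fun π => by rw [hsum π, sum_product]) ?_ 1
    rintro ⟨⟨a₁, a₂⟩, ⟨b₁, b₂⟩⟩ hq
    simp only [pairs, mem_product, mem_filter, mem_univ, true_and] at hq
    obtain ⟨π, h₁, h₂, hmix⟩ :=
      Equiv.Perm.exists_apply_eq_apply_eq_not_image_eq_or_inter_eq_empty hS.ge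
        (by simpa [hS] using hn) hq.1 hq.2
    exact ⟨π, ⟨h₁, h₂⟩, by rw [hf, if_neg hmix]⟩
  linarith
end

section
/- Let n = 6, k = 3, and define f on the slice J(6,3) = {x ∈ {0,1}⁶ : x₁+⋯+x₆ = 3} by f(x) = 1 if x₁ = x₂ = x₃ and 0 otherwise. Then f cannot be written as a sum of monomials of degree at most 2 in the literals x₁,…,x₆, 1−x₁,…,1−x₆ that agrees with f at every point of J(6,3). -/
/-- A literal on `{0,1}⁶`: a coordinate `x i` or its negation `1 - x i`. -/
def Literal6 (g : (Fin 6 → ℤ) → ℤ) : Prop :=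
  ∃ i : Fin 6, (g = fun x => x i) ∨ (g = fun x => 1 - x i)

/-- A monomial of degree at most 2: a product of at most two literals. -/
def Mono2six (g : (Fin 6 → ℤ) → ℤ) : Prop :=
  (g = fun _ => 1) ∨ Literal6 g ∨
    ∃ a b, Literal6 a ∧ Literal6 b ∧ g = fun x => a x * b x

def pvec6 : Fin 6 → ℤ := ![1,1,1,0,0,0]

def Lzero : List (Fin 6 → ℤ) :=
  [ ![0,0,1,0,1,1],
    ![0,0,1,1,0,1],
    ![0,0,1,1,1,0],
    ![0,1,0,0,1,1],
    ![0,1,0,1,0,1],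
    ![0,1,0,1,1,0],
    ![0,1,1,0,0,1],
    ![0,1,1,0,1,0],
    ![0,1,1,1,0,0],
    ![1,0,0,0,1,1],
    ![1,0,0,1,0,1],
    ![1,0,0,1,1,0],
    ![1,0,1,0,0,1],
    ![1,0,1,0,1,0],
    ![1,0,1,1,0,0],
    ![1,1,0,0,0,1],
    ![1,1,0,0,1,0],
    ![1,1,0,1,0,0] ]

lemma key6 : ∀ i1 i2 : Fin 6, ∃ y ∈ Lzero, y i1 = pvec6 i1 ∧ y i2 = pvec6 i2 := by
  decide

lemma Lzero_props : ∀ y ∈ Lzero,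
    (∀ i, y i = 0 ∨ y i = 1) ∧ (∑ i, y i = 3) ∧ ¬(y 0 = y 1 ∧ y 1 = y 2) := by
  decide

lemma lit_vals (a : (Fin 6 → ℤ) → ℤ) (ha : Literal6 a) (x : Fin 6 → ℤ)
    (hx : ∀ i, x i = 0 ∨ x i = 1) : a x = 0 ∨ a x = 1 := by
  obtain ⟨i, h | h⟩ := ha <;> subst h <;> rcases hx i with h | h <;> simp [h]

lemma mono_nonneg (g : (Fin 6 → ℤ) → ℤ) (hg : Mono2six g) (x : Fin 6 → ℤ)
    (hx : ∀ i, x i = 0 ∨ x i = 1) : 0 ≤ g x := by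
  rcases hg with h | h | ⟨a, b, ha, hb, h⟩
  · simp [h]
  · rcases lit_vals g h x hx with h' | h' <;> omega
  · subst h
    rcases lit_vals a ha x hx with h1 | h1 <;>
      rcases lit_vals b hb x hx with h2 | h2 <;> simp [h1, h2]

lemma lit_congr {a : (Fin 6 → ℤ) → ℤ} {y z : Fin 6 → ℤ} {i : Fin 6}
    (ha : (a = fun x => x i) ∨ (a = fun x => 1 - x i)) (h : y i = z i) : a y = a z := by
  rcases ha with rfl | rfl <;> simp [h]

lemma vanish (g : (Fin 6 → ℤ) → ℤ) (hg : Mono2six g)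
    (h0 : ∀ y ∈ Lzero, g y = 0) : g pvec6 = 0 := by
  rcases hg with h | ⟨i, h⟩ | ⟨a, b, ⟨i1, ha⟩, ⟨i2, hb⟩, h⟩
  · exfalso
    have := h0 ![0,0,1,0,1,1] (by simp [Lzero])
    rw [h] at this
    exact one_ne_zero this
  · obtain ⟨y, hyL, hy1, _⟩ := key6 i i
    have := h0 y hyL
    rwa [lit_congr h hy1] at this
  · subst h
    obtain ⟨y, hyL, hy1, hy2⟩ := key6 i1 i2
    have := h0 y hyL
    simp only [lit_congr ha hy1, lit_congr hb hy2] at this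
    exact this

theorem stmt17 :
    ¬ ∃ (m : ℕ) (M : Fin m → ((Fin 6 → ℤ) → ℤ)),
        (∀ j, Mono2six (M j)) ∧
        ∀ x : Fin 6 → ℤ, (∀ i, x i = 0 ∨ x i = 1) → (∑ i, x i = 3) →
          (∑ j, M j x) = (if x 0 = x 1 ∧ x 1 = x 2 then (1 : ℤ) else 0) := by
  rintro ⟨m, M, hM, hval⟩
  have hzero : ∀ j, ∀ y ∈ Lzero, M j y = 0 := by
    intro j y hy
    obtain ⟨hb, hs, hf⟩ := Lzero_props y hy
    have hsum := hval y hb hs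
    rw [if_neg hf] at hsum
    exact (Finset.sum_eq_zero_iff_of_nonneg
      (fun j _ => mono_nonneg _ (hM j) y hb)).mp hsum j (Finset.mem_univ j)
  have hpbool : ∀ i, pvec6 i = 0 ∨ pvec6 i = 1 := by decide
  have hpsum : ∑ i, pvec6 i = 3 := by decide
  have hp := hval pvec6 hpbool hpsum
  rw [if_pos (by decide : pvec6 0 = pvec6 1 ∧ pvec6 1 = pvec6 2)] at hp
  have h0 : ∑ j, M j pvec6 = 0 :=
    Finset.sum_eq_zero (fun j _ => vanish _ (hM j) (hzero j))
  rw [h0] at hp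
  exact one_ne_zero hp.symm
end
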